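/- arXiv:1303.4276 — 3 statements merged into one kernel-verified Lean document; each statement's English description precedes it below -/
import Mathlib

section
/- Let S be a complete semiring and (C, ⊗, I) a small strict monoidal category. The set Q_S(C) of functions Mor(C) → S, with pointwise addition, the monoidal convolution product (f×g)(γ) = ∑_{α⊗β = γ} g(β)·f(α) (sum over all factorizations of γ as a tensor product of two morphisms), and unit the characteristic function of id_I, is a complete semiring. -/
/-- A complete (additive, commutative) monoid in the sense of Eilenberg: a commutative
monoid equipped with a summation law over arbitrary index sets, extending finite sums
and satisfying the partition axiom. -/
class CompleteAddMonoid (M : Type) [AddCommMonoid M] where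
  csum : {I : Type} → (I → M) → M
  csum_empty : ∀ {I : Type} [IsEmpty I] (f : I → M), csum f = 0
  csum_unique : ∀ {I : Type} [Unique I] (f : I → M), csum f = f default
  csum_pair : ∀ (f : Bool → M), csum f = f true + f false
  csum_partition : ∀ {I J : Type} (p : I → J) (f : I → M),
    csum (fun j : J => csum (fun i : {i : I // p i = j} => f i.1)) = csum f

/-- A complete semiring: a semiring whose additive monoid is complete and where
multiplication distributes over infinite sums from both sides. -/
class CompleteSemiring (S : Type) [Semiring S] extends CompleteAddMonoid S where
  csum_mul_left : ∀ {I : Type} (s : S) (f : I → S),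
    s * csum f = csum (fun i => s * f i)
  csum_mul_right : ∀ {I : Type} (s : S) (f : I → S),
    csum f * s = csum (fun i => f i * s)

open CompleteAddMonoid

open CategoryTheory

open scoped Classical

/-- The set of all morphisms of a small category, as a type. -/
def Mor (C : Type) [SmallCategory C] : Type := Σ X Y : C, X ⟶ Y

/-- A strict monoidal structure on a small category `C`: a tensor product on objects
and morphisms which is strictly associative and strictly unital, together with the
interchange law making it a bifunctor. -/
structure StrictMonoidalStruct (C : Type) [SmallCategory C] where
  tO : C → C → C
  unit : C
  tH : {X Y X' Y' : C} → (X ⟶ Y) → (X' ⟶ Y') → (tO X X' ⟶ tO Y Y')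
  assocO : ∀ X Y Z : C, tO (tO X Y) Z = tO X (tO Y Z)
  unitO_left : ∀ X : C, tO unit X = X
  unitO_right : ∀ X : C, tO X unit = X
  assocH : ∀ {X Y X' Y' X'' Y'' : C} (f : X ⟶ Y) (g : X' ⟶ Y') (h : X'' ⟶ Y''),
    HEq (tH (tH f g) h) (tH f (tH g h))
  unitH_left : ∀ {X Y : C} (f : X ⟶ Y), HEq (tH (𝟙 unit) f) f
  unitH_right : ∀ {X Y : C} (f : X ⟶ Y), HEq (tH f (𝟙 unit)) f
  id_tensor_id : ∀ X Y : C, tH (𝟙 X) (𝟙 Y) = 𝟙 (tO X Y)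
  interchange : ∀ {X Y Z X' Y' Z' : C} (f : X ⟶ Y) (g : Y ⟶ Z) (f' : X' ⟶ Y') (g' : Y' ⟶ Z'),
    tH (f ≫ g) (f' ≫ g') = tH f f' ≫ tH g g'

/-- The tensor product of two morphisms, at the level of the set `Mor C`. -/
def StrictMonoidalStruct.tMor {C : Type} [SmallCategory C]
    (M : StrictMonoidalStruct C) (m m' : Mor C) : Mor C :=
  ⟨M.tO m.1 m'.1, M.tO m.2.1 m'.2.1, M.tH m.2.2 m'.2.2⟩

/-- The monoidal convolution product on `Q_S(C)`:
`(f × g)(γ) = ∑_{α ⊗ β = γ} g(β) · f(α)`, summing over all factorizations of `γ`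
as a tensor product of two morphisms. -/
noncomputable def convM {S : Type} [Semiring S] [CompleteSemiring S]
    {C : Type} [SmallCategory C] (M : StrictMonoidalStruct C)
    (f g : Mor C → S) : Mor C → S :=
  fun γ => csum (fun t : {p : Mor C × Mor C // M.tMor p.1 p.2 = γ} =>
    g t.1.2 * f t.1.1)

/-- The unit for monoidal convolution: the characteristic function of `id_I`. -/
noncomputable def convMOne {S : Type} [Semiring S]
    {C : Type} [SmallCategory C] (M : StrictMonoidalStruct C) : Mor C → S :=
  fun γ => if γ = ⟨M.unit, M.unit, 𝟙 M.unit⟩ then 1 else 0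


/-!
Pointwise sums make `Mor C → S` complete. For the product, every semiring law reduces, after
distributing the multiplications of `S` over the sums with the infinite distributive laws,
to re-indexing one sum by a bijection between index sets; the only nontrivial one is
associativity, where `(a ⊗ b) ⊗ c = a ⊗ (b ⊗ c)` identifies the factorizations `γ = α ⊗ c`,
`α = a ⊗ b` with the factorizations `γ = a ⊗ δ`, `δ = b ⊗ c`. For the unit, strict
unitality makes `γ = γ ⊗ id_I` the only factorization with a nonzero summand.
-/

namespace CompleteAddMonoid

variable {M : Type} [AddCommMonoid M] [CompleteAddMonoid M]

theorem csum_equiv {I J : Type} (e : I ≃ J) (f : J → M) :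
    csum (fun i => f (e i)) = csum f := by
  rw [← csum_partition e (fun i => f (e i))]
  refine congrArg csum (funext fun j => ?_)
  let : Unique {i : I // e i = j} :=
    { default := ⟨e.symm j, e.apply_symm_apply j⟩
      uniq := fun x => Subtype.ext (by simp [← x.2]) }
  rw [csum_unique]
  exact congrArg f (e.apply_symm_apply j)

def sigmaFiberEquiv {I : Type} {F : I → Type} (i : I) :
    F i ≃ {s : Σ i, F i // s.1 = i} where
  toFun x := ⟨⟨i, x⟩, rfl⟩
  invFun s := cast (congrArg F s.2) s.1.2
  left_inv _ := rfl
  right_inv := by rintro ⟨⟨j, y⟩, rfl⟩; rfl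

theorem csum_sigma {I : Type} {F : I → Type} (f : (Σ i, F i) → M) :
    csum (fun i => csum (fun x : F i => f ⟨i, x⟩)) = csum f := by
  rw [← csum_partition Sigma.fst f]
  exact congrArg csum (funext fun i =>
    csum_equiv (sigmaFiberEquiv i) (fun s : {s : Σ i, F i // s.1 = i} => f s.1))

theorem csum_prod {A B : Type} (f : A × B → M) :
    csum (fun a => csum (fun b => f (a, b))) = csum f :=
  (csum_sigma (F := fun _ : A => B) (fun s => f (s.1, s.2))).trans
    (csum_equiv (Equiv.sigmaEquivProd A B) f)

theorem csum_comm {A B : Type} (F : A → B → M) :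
    csum (fun a => csum (fun b => F a b)) = csum (fun b => csum (fun a => F a b)) :=
  (csum_prod (fun x => F x.1 x.2)).trans <|
    (csum_equiv (Equiv.prodComm A B) (fun x => F x.2 x.1)).trans (csum_prod _).symm

theorem csum_add {I : Type} (a b : I → M) :
    csum (fun i => a i + b i) = csum a + csum b := by
  let F : I → Bool → M := fun i c => if c then a i else b i
  calc csum (fun i => a i + b i) = csum (fun i => csum (F i)) := by simp only [F, csum_pair]; rfl
    _ = csum (fun c => csum (fun i => F i c)) := csum_comm F
    _ = csum a + csum b := by rw [csum_pair]; rfl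

/-- A zero family is the partition of the empty family into empty fibers. -/
theorem csum_zero (I : Type) : csum (fun _ : I => (0 : M)) = 0 := by
  have h := csum_partition (Empty.elim : Empty → I) (fun e => (e.elim : M))
  simp only [csum_empty] at h
  exact h

theorem csum_eq_single {I : Type} (f : I → M) (i₀ : I) (h : ∀ i, i ≠ i₀ → f i = 0) :
    csum f = f i₀ := by
  rw [← csum_partition (fun i => decide (i = i₀)) f, csum_pair]
  have hsingle : csum (fun i : {i : I // decide (i = i₀) = true} => f i.1) = f i₀ := by
    let : Unique {i : I // decide (i = i₀) = true} :=
      { default := ⟨i₀, by simp⟩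
        uniq := fun x => Subtype.ext (of_decide_eq_true x.2) }
    exact csum_unique _
  have hrest : csum (fun i : {i : I // decide (i = i₀) = false} => f i.1) = 0 := by
    rw [show (fun i : {i : I // decide (i = i₀) = false} => f i.1) = fun _ => 0
        from funext fun x => h x.1 (of_decide_eq_false x.2)]
    exact csum_zero _
  rw [hsingle, hrest, add_zero]

instance instPi {ι : Type} : CompleteAddMonoid (ι → M) where
  csum fs x := csum (fun i => fs i x)
  csum_empty _ := funext fun _ => csum_empty _
  csum_unique _ := funext fun _ => csum_unique _
  csum_pair _ := funext fun _ => csum_pair _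
  csum_partition p f := funext fun x => csum_partition p (fun i => f i x)

end CompleteAddMonoid

open CompleteSemiring

theorem Mor.mk_eq_mk {C : Type} [SmallCategory C] {X Y X' Y' : C} {f : X ⟶ Y} {f' : X' ⟶ Y'}
    (hX : X = X') (hY : Y = Y') (hf : HEq f f') : (⟨X, Y, f⟩ : Mor C) = ⟨X', Y', f'⟩ := by
  subst hX hY
  rw [eq_of_heq hf]

namespace StrictMonoidalStruct

variable {C : Type} [SmallCategory C] (M : StrictMonoidalStruct C)

theorem tMor_assoc (a b c : Mor C) : M.tMor (M.tMor a b) c = M.tMor a (M.tMor b c) :=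
  Mor.mk_eq_mk (M.assocO _ _ _) (M.assocO _ _ _) (M.assocH a.2.2 b.2.2 c.2.2)

theorem tMor_unit_right (m : Mor C) : M.tMor m ⟨M.unit, M.unit, 𝟙 M.unit⟩ = m :=
  Mor.mk_eq_mk (M.unitO_right _) (M.unitO_right _) (M.unitH_right m.2.2)

theorem unit_tMor (m : Mor C) : M.tMor ⟨M.unit, M.unit, 𝟙 M.unit⟩ m = m :=
  Mor.mk_eq_mk (M.unitO_left _) (M.unitO_left _) (M.unitH_left m.2.2)

abbrev Factorization (γ : Mor C) : Type := {p : Mor C × Mor C // M.tMor p.1 p.2 = γ}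

/-- `((a ⊗ b) ⊗ c = γ, with α = a ⊗ b) ↦ (a ⊗ (b ⊗ c) = γ, with δ = b ⊗ c)`. -/
def factorizationAssocEquiv (γ : Mor C) :
    (Σ t : M.Factorization γ, M.Factorization t.1.1) ≃
      (Σ t : M.Factorization γ, M.Factorization t.1.2) where
  toFun s := ⟨⟨(s.2.1.1, M.tMor s.2.1.2 s.1.1.2), by rw [← tMor_assoc, s.2.2, s.1.2]⟩,
    ⟨(s.2.1.2, s.1.1.2), rfl⟩⟩
  invFun s := ⟨⟨(M.tMor s.1.1.1 s.2.1.1, s.2.1.2), by rw [tMor_assoc, s.2.2, s.1.2]⟩,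
    ⟨(s.1.1.1, s.2.1.1), rfl⟩⟩
  left_inv := by
    rintro ⟨⟨⟨α, c⟩, hγ⟩, ⟨⟨a, b⟩, hα⟩⟩
    obtain rfl : M.tMor a b = α := hα
    rfl
  right_inv := by
    rintro ⟨⟨⟨a, δ⟩, hγ⟩, ⟨⟨b, c⟩, hδ⟩⟩
    obtain rfl : M.tMor b c = δ := hδ
    rfl

end StrictMonoidalStruct

open StrictMonoidalStruct

section Convolution

variable {S : Type} [Semiring S] [CompleteSemiring S] {C : Type} [SmallCategory C]
  (M : StrictMonoidalStruct C)

theorem convM_apply (f g : Mor C → S) (γ : Mor C) :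
    convM M f g γ = csum (fun t : M.Factorization γ => g t.1.2 * f t.1.1) :=
  rfl

theorem convM_assoc (f g h : Mor C → S) :
    convM M (convM M f g) h = convM M f (convM M g h) := by
  funext γ
  calc convM M (convM M f g) h γ
      = csum (fun t : M.Factorization γ =>
          csum (fun q : M.Factorization t.1.1 => h t.1.2 * (g q.1.2 * f q.1.1))) :=
        congrArg csum (funext fun _ => csum_mul_left _ _)
    _ = csum (fun s : Σ t : M.Factorization γ, M.Factorization t.1.1 =>
          h s.1.1.2 * (g s.2.1.2 * f s.2.1.1)) :=
        csum_sigma (fun s : Σ t : M.Factorization γ, M.Factorization t.1.1 =>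
          h s.1.1.2 * (g s.2.1.2 * f s.2.1.1))
    _ = csum (fun s : Σ t : M.Factorization γ, M.Factorization t.1.2 =>
          h s.2.1.2 * g s.2.1.1 * f s.1.1.1) := by
        rw [← csum_equiv (factorizationAssocEquiv M γ)]
        exact congrArg csum (funext fun _ => (mul_assoc _ _ _).symm)
    _ = csum (fun t : M.Factorization γ =>
          csum (fun q : M.Factorization t.1.2 => h q.1.2 * g q.1.1 * f t.1.1)) :=
        (csum_sigma (fun s : Σ t : M.Factorization γ, M.Factorization t.1.2 =>
          h s.2.1.2 * g s.2.1.1 * f s.1.1.1)).symm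
    _ = convM M f (convM M g h) γ :=
        congrArg csum (funext fun _ => (csum_mul_right _ _).symm)

theorem convM_convMOne (f : Mor C → S) : convM M f (convMOne M) = f := by
  funext γ
  rw [convM_apply, csum_eq_single _ ⟨(γ, ⟨M.unit, M.unit, 𝟙 M.unit⟩), M.tMor_unit_right γ⟩]
  · rw [convMOne, if_pos rfl, one_mul]
  · rintro ⟨⟨α, β⟩, hαβ⟩ hne
    have hβ : β ≠ ⟨M.unit, M.unit, 𝟙 M.unit⟩ := by
      rintro rfl
      rw [tMor_unit_right] at hαβ
      exact hne (by subst hαβ; rfl)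
    simp only [convMOne, if_neg hβ, zero_mul]

theorem convMOne_convM (f : Mor C → S) : convM M (convMOne M) f = f := by
  funext γ
  rw [convM_apply, csum_eq_single _ ⟨(⟨M.unit, M.unit, 𝟙 M.unit⟩, γ), M.unit_tMor γ⟩]
  · rw [convMOne, if_pos rfl, mul_one]
  · rintro ⟨⟨α, β⟩, hαβ⟩ hne
    have hα : α ≠ ⟨M.unit, M.unit, 𝟙 M.unit⟩ := by
      rintro rfl
      rw [unit_tMor] at hαβ
      exact hne (by subst hαβ; rfl)
    simp only [convMOne, if_neg hα, mul_zero]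

theorem convM_add (f g h : Mor C → S) :
    convM M f (g + h) = convM M f g + convM M f h := by
  funext γ
  simp only [convM_apply, Pi.add_apply, add_mul, csum_add]

theorem add_convM (f g h : Mor C → S) :
    convM M (f + g) h = convM M f h + convM M g h := by
  funext γ
  simp only [convM_apply, Pi.add_apply, mul_add, csum_add]

theorem convM_zero (f : Mor C → S) : convM M f 0 = 0 := by
  funext γ
  simp only [convM_apply, Pi.zero_apply, zero_mul, csum_zero]

theorem zero_convM (f : Mor C → S) : convM M 0 f = 0 := by
  funext γ
  simp only [convM_apply, Pi.zero_apply, mul_zero, csum_zero]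

theorem convM_csum {I : Type} (fs : I → Mor C → S) (g : Mor C → S) (γ : Mor C) :
    convM M g (fun δ => csum (fun i => fs i δ)) γ = csum (fun i => convM M g (fs i) γ) := by
  simp only [convM_apply, csum_mul_right]
  exact csum_comm _

theorem csum_convM {I : Type} (fs : I → Mor C → S) (g : Mor C → S) (γ : Mor C) :
    convM M (fun δ => csum (fun i => fs i δ)) g γ = csum (fun i => convM M (fs i) g γ) := by
  simp only [convM_apply, csum_mul_left]
  exact csum_comm _

end Convolution

/-- `Q_S(C)` with pointwise addition and pointwise summation, the monoidal convolution
product and the characteristic function of `id_I` as unit, is a complete semiring. -/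
theorem monoidal_convolution_complete_semiring (S : Type) [Semiring S] [CompleteSemiring S]
    (C : Type) [SmallCategory C] (M : StrictMonoidalStruct C) :
    (∃ cm : CompleteAddMonoid (Mor C → S),
      ∀ (I : Type) (fs : I → Mor C → S) (γ : Mor C),
        cm.csum fs γ = csum (fun i => fs i γ)) ∧
    (∀ f g h : Mor C → S, convM M (convM M f g) h = convM M f (convM M g h)) ∧
    (∀ f : Mor C → S, convM M f (convMOne M) = f) ∧
    (∀ f : Mor C → S, convM M (convMOne M) f = f) ∧
    (∀ f g h : Mor C → S, convM M f (g + h) = convM M f g + convM M f h) ∧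
    (∀ f g h : Mor C → S, convM M (f + g) h = convM M f h + convM M g h) ∧
    (∀ f : Mor C → S, convM M f 0 = 0) ∧
    (∀ f : Mor C → S, convM M 0 f = 0) ∧
    (∀ (I : Type) (fs : I → Mor C → S) (g : Mor C → S) (γ : Mor C),
      convM M g (fun δ => csum (fun i => fs i δ)) γ = csum (fun i => convM M g (fs i) γ)) ∧
    (∀ (I : Type) (fs : I → Mor C → S) (g : Mor C → S) (γ : Mor C),
      convM M (fun δ => csum (fun i => fs i δ)) g γ = csum (fun i => convM M (fs i) g γ)) :=
  ⟨⟨CompleteAddMonoid.instPi, fun _ _ _ => rfl⟩, convM_assoc M, convM_convMOne M,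
    convMOne_convM M, convM_add M, add_convM M, convM_zero M, zero_convM M,
    fun _ => convM_csum M, fun _ => csum_convM M⟩
end

section
/- Let C be a strict monoidal category. For every morphism γ, the composition-tensor-composition set CTC(γ) = {(ξ',ξ'',η',η'') : (η'∘ξ')⊗(η''∘ξ'') = γ} is contained in the tensor-composition-tensor set TCT(γ) = {(ξ',ξ'',η',η'') : (η'⊗η'')∘(ξ'⊗ξ'') = γ}, and CTC(γ) = TCT(γ) for all morphisms γ if and only if C has exactly one object. -/
open CompleteAddMonoid

open CategoryTheory

open scoped Classical

/-- Composition of two morphisms at the level of the set `Mor C`, given the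
composability condition `cod m = dom m'`. -/
def cMor {C : Type} [SmallCategory C] (m m' : Mor C) (h : m.2.1 = m'.1) : Mor C :=
  ⟨m.1, m'.2.1, m.2.2 ≫ eqToHom h ≫ m'.2.2⟩

/-- The composition-tensor-composition set of a morphism `γ`: quadruples
`(ξ', ξ'', η', η'')` with `(η' ∘ ξ') ⊗ (η'' ∘ ξ'') = γ` (in particular, both composites
must be defined). -/
def CTC {C : Type} [SmallCategory C] (M : StrictMonoidalStruct C) (γ : Mor C) :
    Set (Mor C × Mor C × Mor C × Mor C) :=
  {q | ∃ (h1 : q.1.2.1 = q.2.2.1.1) (h2 : q.2.1.2.1 = q.2.2.2.1),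
    M.tMor (cMor q.1 q.2.2.1 h1) (cMor q.2.1 q.2.2.2 h2) = γ}

/-- The tensor-composition-tensor set of a morphism `γ`: quadruples
`(ξ', ξ'', η', η'')` with `(η' ⊗ η'') ∘ (ξ' ⊗ ξ'') = γ`. -/
def TCT {C : Type} [SmallCategory C] (M : StrictMonoidalStruct C) (γ : Mor C) :
    Set (Mor C × Mor C × Mor C × Mor C) :=
  {q | ∃ h : (M.tMor q.1 q.2.1).2.1 = (M.tMor q.2.2.1 q.2.2.2).1,
    cMor (M.tMor q.1 q.2.1) (M.tMor q.2.2.1 q.2.2.2) h = γ}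


lemma tH_eqToHom {C : Type} [SmallCategory C] (M : StrictMonoidalStruct C)
    {X Y X' Y' : C} (p : X = Y) (q : X' = Y') :
    M.tH (eqToHom p) (eqToHom q) = eqToHom (by rw [p, q]) := by
  subst p; subst q; simp [M.id_tensor_id]

lemma key_interchange {C : Type} [SmallCategory C] (M : StrictMonoidalStruct C)
    (a b c d : Mor C) (h1 : a.2.1 = c.1) (h2 : b.2.1 = d.1) :
    M.tMor (cMor a c h1) (cMor b d h2)
      = cMor (M.tMor a b) (M.tMor c d) (by simp [StrictMonoidalStruct.tMor, h1, h2]) := by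
  show (⟨M.tO a.1 b.1, M.tO c.2.1 d.2.1,
      M.tH (a.2.2 ≫ eqToHom h1 ≫ c.2.2) (b.2.2 ≫ eqToHom h2 ≫ d.2.2)⟩ : Mor C)
    = ⟨M.tO a.1 b.1, M.tO c.2.1 d.2.1,
      M.tH a.2.2 b.2.2 ≫ eqToHom _ ≫ M.tH c.2.2 d.2.2⟩
  congr 1
  congr 1
  rw [M.interchange, M.interchange, tH_eqToHom]

/-- In a strict monoidal category, `CTC(γ) ⊆ TCT(γ)` for every morphism `γ`, and
`CTC(γ) = TCT(γ)` for all `γ` if and only if the category has exactly one object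
(namely the unit object). -/
theorem ctc_subset_tct_and_eq_iff_one_object
    (C : Type) [SmallCategory C] (M : StrictMonoidalStruct C) :
    (∀ γ : Mor C, CTC M γ ⊆ TCT M γ) ∧
    ((∀ γ : Mor C, CTC M γ = TCT M γ) ↔ ∀ X : C, X = M.unit) := by
  have sub : ∀ γ : Mor C, CTC M γ ⊆ TCT M γ := by
    intro γ q hq
    obtain ⟨h1, h2, hq⟩ := hq
    refine ⟨by simp [StrictMonoidalStruct.tMor, h1, h2], ?_⟩
    rw [← hq, key_interchange]
  refine ⟨sub, ?_, ?_⟩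
  · intro hall X
    set ξ' : Mor C := ⟨M.unit, M.unit, 𝟙 M.unit⟩
    set ξ'' : Mor C := ⟨X, X, 𝟙 X⟩
    have h : (M.tMor ξ' ξ'').2.1 = (M.tMor ξ'' ξ').1 := by
      show M.tO M.unit X = M.tO X M.unit
      rw [M.unitO_left, M.unitO_right]
    have hmem : (ξ', ξ'', ξ'', ξ') ∈ TCT M (cMor (M.tMor ξ' ξ'') (M.tMor ξ'' ξ') h) :=
      ⟨h, rfl⟩
    rw [← hall] at hmem
    obtain ⟨h1, _, _⟩ := hmem
    exact h1.symm
  · intro hone γ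
    refine Set.Subset.antisymm (sub γ) ?_
    intro q hq
    obtain ⟨h, hq⟩ := hq
    have h1 : q.1.2.1 = q.2.2.1.1 := (hone _).trans (hone _).symm
    have h2 : q.2.1.2.1 = q.2.2.2.1 := (hone _).trans (hone _).symm
    exact ⟨h1, h2, by rw [key_interchange]; exact hq⟩
end

section
/- Let a finite group G act on a finite set X and let Y be a finite set of colors, with G acting on the set W = Fun(X,Y) of colorings by (w·g)(x) = w(gx). Then |W/G| · |G| = ∑_{w∈W} |G_w| = ∑_{g∈G} |W^g|, and consequently Pólya's enumeration formula |Fun(X,Y)/G| = (1/|G|) ∑_{g∈G} |Y|^{c(g)} holds, where c(g) is the number of cycles of g acting on X. -/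
/-- The equivalence relation on colorings `W = Fun(X,Y)` induced by the right action
`(w·g)(x) = w(g·x)` of `G`: two colorings are equivalent iff they lie in the same
`G`-orbit. -/
def colorSetoid (G X Y : Type) [Group G] [MulAction G X] : Setoid (X → Y) where
  r w w' := ∃ g : G, ∀ x, w' x = w (g • x)
  iseqv := by
    constructor
    · intro w; exact ⟨1, fun x => by rw [one_smul]⟩
    · rintro w w' ⟨g, hg⟩
      exact ⟨g⁻¹, fun x => by rw [hg, smul_inv_smul]⟩
    · rintro w w' w'' ⟨g, hg⟩ ⟨h, hh⟩
      exact ⟨g * h, fun x => by rw [hh, hg, mul_smul]⟩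

/-!
The right action `(w·g)(x) = w(g·x)` on colorings is the left action of the opposite group
`Gᵈᵐᵃ` (`DomMulAct`), so `W/G` is its orbit space and Burnside's lemma applies. Counting the
pairs `(w, g)` with `w·g = w` by rows and by columns identifies `∑ |G_w|` with `∑ |W^g|`.
A coloring fixed by `g` is fixed by every power of `g`, hence is the same as a coloring of
the `⟨g⟩`-orbits, i.e. of the cycles of `g`, giving `|W^g| = |Y|^{c(g)}`.
-/

open MulAction

theorem Fintype.sum_natCard_subtype_comm {A B : Type*} [Fintype A] [Fintype B]
    (P : A → B → Prop) :
    ∑ a, Nat.card {b // P a b} = ∑ b, Nat.card {a // P a b} := by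
  classical
  simp only [Nat.card_eq_fintype_card, Fintype.card_subtype, Finset.card_filter]
  exact Finset.sum_comm

theorem MulAction.card_orbitRel_quotient_mul_card_group (M α : Type*) [Group M] [MulAction M α]
    [Fintype M] [Finite α] :
    Nat.card (orbitRel.Quotient M α) * Nat.card M = ∑ m : M, Nat.card (fixedBy α m) := by
  classical
  have := Fintype.ofFinite α
  simp only [Nat.card_eq_fintype_card]
  exact (sum_card_fixedBy_eq_card_orbits_mul_card_group M α).symm

section Colorings

variable {G X Y : Type*} [Group G] [MulAction G X]

theorem DomMulAct.mem_fixedBy_iff (c : Gᵈᵐᵃ) (w : X → Y) :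
    w ∈ fixedBy (X → Y) c ↔ ∀ x, w (DomMulAct.mk.symm c • x) = w x := by
  simp only [mem_fixedBy, funext_iff, DomMulAct.smul_apply]

theorem forall_smul_eq_iff_orbitRel_zpowers_le_ker (g : G) (w : X → Y) :
    (∀ x, w (g • x) = w x) ↔ orbitRel (Subgroup.zpowers g) X ≤ Setoid.ker w := by
  refine ⟨fun hw x y ⟨⟨h, hh⟩, hxy⟩ => ?_, fun hw x => hw ⟨⟨g, Subgroup.mem_zpowers g⟩, rfl⟩⟩
  obtain ⟨n, rfl⟩ := Subgroup.mem_zpowers_iff.mp hh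
  have hwn := fixedBy_subset_fixedBy_zpow (X → Y) (DomMulAct.mk g) n <| by
    simpa only [DomMulAct.mem_fixedBy_iff, Equiv.symm_apply_apply] using hw
  rw [DomMulAct.mem_fixedBy_iff, DomMulAct.symm_mk_zpow, Equiv.symm_apply_apply] at hwn
  exact hxy ▸ hwn y

def fixedColoringsEquiv (g : G) :
    {w : X → Y // ∀ x, w (g • x) = w x} ≃ (orbitRel.Quotient (Subgroup.zpowers g) X → Y) :=
  (Equiv.subtypeEquivRight (forall_smul_eq_iff_orbitRel_zpowers_le_ker g)).trans
    (Setoid.liftEquiv _)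

theorem card_fixedColorings [Finite X] (g : G) :
    Nat.card {w : X → Y // ∀ x, w (g • x) = w x}
      = Nat.card Y ^ Nat.card (orbitRel.Quotient (Subgroup.zpowers g) X) := by
  rw [Nat.card_congr (fixedColoringsEquiv g), Nat.card_fun]

end Colorings

theorem colorSetoid_eq_orbitRel (G X Y : Type) [Group G] [MulAction G X] :
    colorSetoid G X Y = orbitRel Gᵈᵐᵃ (X → Y) := by
  ext w w'
  rw [orbitRel_apply, mem_orbit_symm, mem_orbit_iff]
  refine ⟨fun ⟨g, hg⟩ => ⟨DomMulAct.mk g, ?_⟩, fun ⟨c, hc⟩ => ⟨DomMulAct.mk.symm c, ?_⟩⟩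
  · exact funext fun x => by rw [DomMulAct.smul_apply, Equiv.symm_apply_apply, hg]
  · exact fun x => by rw [← hc, DomMulAct.smul_apply]

theorem card_quotient_colorSetoid_mul_card_group (G X Y : Type) [Group G] [Fintype G]
    [Finite X] [Finite Y] [MulAction G X] :
    Nat.card (Quotient (colorSetoid G X Y)) * Nat.card G
      = ∑ g : G, Nat.card {w : X → Y // ∀ x, w (g • x) = w x} := by
  let _ : Fintype Gᵈᵐᵃ := Fintype.ofEquiv G DomMulAct.mk
  rw [colorSetoid_eq_orbitRel, Nat.card_congr (DomMulAct.mk (M := G)),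
    card_orbitRel_quotient_mul_card_group, ← Fintype.sum_equiv DomMulAct.mk _ _ fun _ => rfl]
  exact Fintype.sum_congr _ _ fun g => Nat.card_congr <| Equiv.subtypeEquivRight fun w => by
    rw [DomMulAct.mem_fixedBy_iff, Equiv.symm_apply_apply]

/-- Pólya counting: for a finite group `G` acting on a finite set `X` and a finite set
`Y` of colors, with `G` acting on colorings `W = Fun(X,Y)` by `(w·g)(x) = w(g·x)`, one
has `|W/G|·|G| = ∑_{w∈W} |G_w| = ∑_{g∈G} |W^g|`, and Pólya's enumeration formula
`|W/G|·|G| = ∑_{g∈G} |Y|^{c(g)}`, where `c(g)` is the number of cycles of `g` on `X`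
(i.e. the number of orbits of the cyclic group generated by `g`). -/
theorem polya_enumeration (G X Y : Type) [Group G] [Fintype G] [Fintype X] [Fintype Y]
    [DecidableEq X] [MulAction G X] :
    Nat.card (Quotient (colorSetoid G X Y)) * Nat.card G
        = ∑ w : X → Y, Nat.card {g : G // ∀ x, w (g • x) = w x} ∧
    (∑ w : X → Y, Nat.card {g : G // ∀ x, w (g • x) = w x})
        = ∑ g : G, Nat.card {w : X → Y // ∀ x, w (g • x) = w x} ∧
    Nat.card (Quotient (colorSetoid G X Y)) * Nat.card G
        = ∑ g : G, Nat.card Y ^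
            Nat.card (Quotient (MulAction.orbitRel (Subgroup.zpowers g) X)) := by
  have burnside := card_quotient_colorSetoid_mul_card_group G X Y
  have double_count := Fintype.sum_natCard_subtype_comm fun (w : X → Y) (g : G) =>
    ∀ x, w (g • x) = w x
  refine ⟨burnside.trans double_count.symm, double_count, ?_⟩
  rw [burnside]
  exact Fintype.sum_congr _ _ card_fixedColorings
end
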